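/- Every constraint set ς has a least solution ⟦ς⟧: there exists a constraint mapping ⟦ς⟧ : (BlameId × {subject, context}) → 𝔹₄ such that ⟦ς⟧ ⊨ ς and ⟦ς⟧ ⊑ μ (pointwise) for every constraint mapping μ with μ ⊨ ς; moreover ⟦ς⟧ is the least fixpoint of the monotone mapping Fς induced by ς, obtained by the Knaster–Tarski theorem. -/

import Mathlib

/-! Belnap's four-valued lattice 𝔹₄ as pairs of Booleans (can-be-true, can-be-false):
    ⊥ = (false,false), 𝖿 = (false,true), 𝗍 = (true,false), ⊤ = (true,true),
    with the approximation ordering ⊑ being the componentwise (subset) Boolean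
    ordering, i.e. the default `Prod` order. -/
abbrev B4 := Bool × Bool

/-- Belnap negation: ¬(a₁,a₂) = (a₂,a₁). -/
def B4.neg (a : B4) : B4 := (a.2, a.1)
/-- Belnap conjunction: (a₁,a₂) ∧ (b₁,b₂) = (a₁ ∧ b₁, a₂ ∨ b₂). -/
def B4.and (a b : B4) : B4 := (a.1 && b.1, a.2 || b.2)
/-- Belnap disjunction: (a₁,a₂) ∨ (b₁,b₂) = (a₁ ∨ b₁, a₂ ∧ b₂). -/
def B4.or (a b : B4) : B4 := (a.1 || b.1, a.2 && b.2)
/-- Belnap implication a ⇒ b := ¬a ∨ b. -/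
def B4.imp (a b : B4) : B4 := B4.or (B4.neg a) b
/-- The truth value 𝗍. -/
def B4.t : B4 := (true, false)
/-- Translation ⌈·⌉ of a classical outcome into 𝔹₄ (⌈true⌉ = 𝗍, ⌈false⌉ = 𝖿). -/
def B4.ofBool (b : Bool) : B4 := (b, !b)

/-- Blame identifiers ♭: source-level blame labels ℓ or internal blame variables ι. -/
inductive BlameId : Type
  | lbl (n : ℕ)   -- source-level blame label ℓ
  | var (n : ℕ)   -- internal blame variable ι
deriving DecidableEq

/-- The two record fields of a blame identifier. -/
inductive BField : Type
  | subject
  | context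
deriving DecidableEq

/-- Constraint mappings μ : (BlameId × {subject, context}) → 𝔹₄. -/
abbrev CMap := BlameId × BField → B4

/-- μ(ι.subject) for an internal variable ι. -/
def subj (μ : CMap) (i : ℕ) : B4 := μ (BlameId.var i, BField.subject)
/-- μ(ι.context) for an internal variable ι. -/
def ctx (μ : CMap) (i : ℕ) : B4 := μ (BlameId.var i, BField.context)

/-- Constraints κ (Figure 2): ♭ ◁ v, ♭ ◁ ι₁ → ι₂, ♭ ◁ set(ι), ♭ ◁ ι₁ ∩ ι₂,
    ♭ ◁ ι₁ ∪ ι₂, ♭ ◁ ι₁ ∧ ι₂, ♭ ◁ ι₁ ∨ ι₂, ♭ ◁ ¬ι. -/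
inductive Constraint : Type
  | flat  (b : BlameId) (v : Bool)       -- ♭ ◁ v (outcome of a base contract)
  | fc    (b : BlameId) (i1 i2 : ℕ)      -- ♭ ◁ ι₁ → ι₂
  | set   (b : BlameId) (i : ℕ)          -- ♭ ◁ set(ι)
  | inter (b : BlameId) (i1 i2 : ℕ)      -- ♭ ◁ ι₁ ∩ ι₂
  | union (b : BlameId) (i1 i2 : ℕ)      -- ♭ ◁ ι₁ ∪ ι₂
  | conj  (b : BlameId) (i1 i2 : ℕ)      -- ♭ ◁ ι₁ ∧ ι₂
  | disj  (b : BlameId) (i1 i2 : ℕ)      -- ♭ ◁ ι₁ ∨ ι₂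
  | neg   (b : BlameId) (i : ℕ)          -- ♭ ◁ ¬ι
deriving DecidableEq

/-- The head ♭ of a constraint. -/
def Constraint.head : Constraint → BlameId
  | flat b _ => b | fc b _ _ => b | set b _ => b | inter b _ _ => b
  | union b _ _ => b | conj b _ _ => b | disj b _ _ => b | neg b _ => b

/-- Right-hand side (Figure 3) of the ⊑-inequality for μ(♭.subject). -/
def Constraint.subjRHS : Constraint → CMap → B4
  | flat _ v, _ => B4.ofBool v
  | fc _ i1 i2, μ => B4.and (ctx μ i1) (B4.imp (subj μ i1) (subj μ i2))
  | set _ _, _ => B4.t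
  | inter _ i1 i2, μ => B4.and (subj μ i1) (subj μ i2)
  | union _ i1 i2, μ => B4.or (subj μ i1) (subj μ i2)
  | conj _ i1 i2, μ =>
      B4.imp (B4.and (ctx μ i1) (ctx μ i2)) (B4.and (subj μ i1) (subj μ i2))
  | disj _ i1 i2, μ =>
      B4.imp (B4.or (ctx μ i1) (ctx μ i2))
        (B4.or (B4.and (ctx μ i1) (subj μ i1)) (B4.and (ctx μ i2) (subj μ i2)))
  | neg _ i, μ => B4.imp (subj μ i) (B4.neg (ctx μ i))

/-- Right-hand side (Figure 3) of the ⊑-inequality for μ(♭.context). -/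
def Constraint.ctxRHS : Constraint → CMap → B4
  | flat _ _, _ => B4.t
  | fc _ i1 i2, μ => B4.and (subj μ i1) (ctx μ i2)
  | set _ i, μ => subj μ i
  | inter _ i1 i2, μ => B4.or (ctx μ i1) (ctx μ i2)
  | union _ i1 i2, μ => B4.and (ctx μ i1) (ctx μ i2)
  | conj _ i1 i2, μ => B4.and (ctx μ i1) (ctx μ i2)
  | disj _ i1 i2, μ => B4.or (ctx μ i1) (ctx μ i2)
  | neg _ _, _ => B4.t

/-- The right-hand side of the Figure 3 inequality for field `p` of the head. -/
def Constraint.rhs (κ : Constraint) (p : BField) (μ : CMap) : B4 :=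
  match p with
  | BField.subject => κ.subjRHS μ
  | BField.context => κ.ctxRHS μ

/-- μ satisfies a single constraint κ: the two ⊑-inequalities of Figure 3. -/
def SatC (μ : CMap) (κ : Constraint) : Prop :=
  κ.subjRHS μ ≤ μ (κ.head, BField.subject) ∧ κ.ctxRHS μ ≤ μ (κ.head, BField.context)

/-- μ ⊨ ς: μ is a solution of the constraint set ς. -/
def Sat (μ : CMap) (ς : Finset Constraint) : Prop := ∀ κ ∈ ς, SatC μ κ

/-- Fς : for fixed ς, maps μ to the pointwise ⊑-join, over all constraints in ς
    whose head is ♭, of the corresponding Figure-3 Boolean term evaluated in μ;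
    it is a monotone map with μ ⊨ ς iff Fς(μ) ⊑ μ. -/
noncomputable def Fmap (ς : Finset Constraint) (μ : CMap) : CMap :=
  fun bp => (ς.filter (fun κ => κ.head = bp.1)).sup (fun κ => κ.rhs bp.2 μ)

/-! Each Figure-3 right-hand side is a term in the Belnap connectives, which are all
⊑-monotone (negation included, since it merely swaps the two components), so `Fmap ς` is
a monotone self-map of the complete lattice of constraint mappings. Solutions of `ς` are
exactly its pre-fixpoints, and the Knaster–Tarski least fixpoint is also the least
pre-fixpoint. -/

namespace B4

@[gcongr]
lemma neg_mono {a a' : B4} (h : a ≤ a') : a.neg ≤ a'.neg :=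
  ⟨h.2, h.1⟩

@[gcongr]
lemma and_mono {a a' b b' : B4} (ha : a ≤ a') (hb : b ≤ b') : a.and b ≤ a'.and b' :=
  ⟨inf_le_inf ha.1 hb.1, sup_le_sup ha.2 hb.2⟩

@[gcongr]
lemma or_mono {a a' b b' : B4} (ha : a ≤ a') (hb : b ≤ b') : a.or b ≤ a'.or b' :=
  ⟨sup_le_sup ha.1 hb.1, inf_le_inf ha.2 hb.2⟩

@[gcongr]
lemma imp_mono {a a' b b' : B4} (ha : a ≤ a') (hb : b ≤ b') : a.imp b ≤ a'.imp b' :=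
  or_mono (neg_mono ha) hb

end B4

lemma Constraint.rhs_mono (κ : Constraint) (p : BField) : Monotone (κ.rhs p) := by
  intro μ μ' h
  cases p <;> cases κ <;> simp only [rhs, subjRHS, ctxRHS, subj, ctx]
  all_goals first | exact le_rfl | exact h _ | gcongr <;> exact h _

lemma Fmap_mono (ς : Finset Constraint) : Monotone (Fmap ς) :=
  fun _ _ h bp => Finset.sup_mono_fun fun κ _ => κ.rhs_mono bp.2 h

noncomputable def Fmap.toOrderHom (ς : Finset Constraint) : CMap →o CMap :=
  ⟨Fmap ς, Fmap_mono ς⟩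

lemma satC_iff (μ : CMap) (κ : Constraint) :
    SatC μ κ ↔ ∀ p, κ.rhs p μ ≤ μ (κ.head, p) :=
  ⟨fun ⟨hs, hc⟩ p => by cases p <;> assumption, fun h => ⟨h .subject, h .context⟩⟩

lemma sat_iff_Fmap_le (ς : Finset Constraint) (μ : CMap) : Sat μ ς ↔ Fmap ς μ ≤ μ := by
  simp only [Sat, satC_iff, Pi.le_def, Fmap, Finset.sup_le_iff, Finset.mem_filter,
    Prod.forall]
  constructor
  · rintro h b p κ ⟨hκ, rfl⟩
    exact h κ hκ p
  · intro h κ hκ p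
    exact h _ p κ ⟨hκ, rfl⟩

/-- Every constraint set ς has a least solution ⟦ς⟧: it satisfies ς, it is
    pointwise below every solution of ς, and it is the least fixpoint of the
    monotone mapping Fς (as given by the Knaster–Tarski theorem). -/
theorem least_solution_exists (ς : Finset Constraint) :
    ∃ sem : CMap,
      Sat sem ς ∧
      (∀ μ : CMap, Sat μ ς → sem ≤ μ) ∧
      Fmap ς sem = sem ∧
      (∀ μ : CMap, Fmap ς μ = μ → sem ≤ μ) := by
  let f := Fmap.toOrderHom ς
  refine ⟨OrderHom.lfp f, ?_, ?_, OrderHom.map_lfp f, ?_⟩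
  · exact (sat_iff_Fmap_le ς _).mpr (OrderHom.map_lfp f).le
  · exact fun μ hμ => OrderHom.lfp_le f ((sat_iff_Fmap_le ς μ).mp hμ)
  · exact fun μ hμ => OrderHom.lfp_le f hμ.le
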